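/- arXiv:math/9911138 — 2 statements merged into one kernel-verified Lean document; each statement's English description precedes it below -/
import Mathlib

section
/- With C2 = -(x²+t²e^{-2τ∂_t})∂_x - 2xt(1-e^{-τ∂_t})/τ + τ t e^{-2τ∂_t}∂_x and E_τ = ∂²_x - ((e^{τ∂_t}-1)/τ)², the operator identity [E_τ, C2] = -4x E_τ holds, where 4x denotes multiplication by 4x. -/
open Filter Topology

/-- Partial derivative in x. -/
noncomputable def pdx (f : ℝ → ℝ → ℝ) : ℝ → ℝ → ℝ := fun x t => deriv (fun y => f y t) x

/-- Partial derivative in t. -/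
noncomputable def pdt (f : ℝ → ℝ → ℝ) : ℝ → ℝ → ℝ := fun x t => deriv (fun s => f x s) t

/-- Smoothness of a function Φ(x,t) on ℝ². -/
def Smooth2 (f : ℝ → ℝ → ℝ) : Prop := ContDiff ℝ (⊤ : ℕ∞) (fun p : ℝ × ℝ => f p.1 p.2)

/-- H = ∂_t. -/
noncomputable def opH (f : ℝ → ℝ → ℝ) : ℝ → ℝ → ℝ := pdt f
/-- P = ∂_x. -/
noncomputable def opP (f : ℝ → ℝ → ℝ) : ℝ → ℝ → ℝ := pdx f

/-- K_τ = -x(e^{τ∂_t}-1)/τ - t e^{-τ∂_t}∂_x, with e^{aτ∂_t} the time shift by aτ. -/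
noncomputable def opKt (τ : ℝ) (f : ℝ → ℝ → ℝ) : ℝ → ℝ → ℝ :=
  fun x t => -x * ((f x (t + τ) - f x t) / τ) - t * pdx f x (t - τ)

/-- D_τ = -x∂_x - t(1-e^{-τ∂_t})/τ. -/
noncomputable def opDt (τ : ℝ) (f : ℝ → ℝ → ℝ) : ℝ → ℝ → ℝ :=
  fun x t => -x * pdx f x t - t * ((f x t - f x (t - τ)) / τ)

/-- C1_τ = (x² + t²e^{-τ∂_t})(e^{τ∂_t}-1)/τ + 2xt∂_x + τx∂_x + τx²∂²_x. -/
noncomputable def opC1t (τ : ℝ) (f : ℝ → ℝ → ℝ) : ℝ → ℝ → ℝ :=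
  fun x t => x ^ 2 * ((f x (t + τ) - f x t) / τ) + t ^ 2 * ((f x t - f x (t - τ)) / τ)
    + 2 * x * t * pdx f x t + τ * x * pdx f x t + τ * x ^ 2 * pdx (pdx f) x t

/-- C2_τ = -(x² + t²e^{-2τ∂_t})∂_x - 2xt(1-e^{-τ∂_t})/τ + τt e^{-2τ∂_t}∂_x. -/
noncomputable def opC2t (τ : ℝ) (f : ℝ → ℝ → ℝ) : ℝ → ℝ → ℝ :=
  fun x t => -(x ^ 2) * pdx f x t - t ^ 2 * pdx f x (t - 2 * τ)
    - 2 * x * t * ((f x t - f x (t - τ)) / τ) + τ * t * pdx f x (t - 2 * τ)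

/-- The time-discretized wave operator E_τ = ∂²_x - ((e^{τ∂_t}-1)/τ)². -/
noncomputable def opEt (τ : ℝ) (f : ℝ → ℝ → ℝ) : ℝ → ℝ → ℝ :=
  fun x t => pdx (pdx f) x t - (f x (t + 2 * τ) - 2 * f x (t + τ) + f x t) / τ ^ 2

lemma hasDerivAt_pdx (f : ℝ → ℝ → ℝ) (hf : Smooth2 f) (x t : ℝ) :
    HasDerivAt (fun y => f y t) (pdx f x t) x := by
  have hγ : HasDerivAt (fun y : ℝ => ((y, t) : ℝ × ℝ)) ((1 : ℝ), (0 : ℝ)) x :=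
    (hasDerivAt_id x).prodMk (hasDerivAt_const x t)
  have h := ((hf.differentiable (by simp)) (x, t)).hasFDerivAt.comp_hasDerivAt x hγ
  exact h.differentiableAt.hasDerivAt

lemma smooth_pdx (f : ℝ → ℝ → ℝ) (hf : Smooth2 f) : Smooth2 (pdx f) := by
  have key : ∀ x t : ℝ, pdx f x t
      = fderiv ℝ (fun p : ℝ × ℝ => f p.1 p.2) (x, t) (1, 0) := by
    intro x t
    have hγ : HasDerivAt (fun y : ℝ => ((y, t) : ℝ × ℝ)) ((1 : ℝ), (0 : ℝ)) x :=
      (hasDerivAt_id x).prodMk (hasDerivAt_const x t)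
    have h := ((hf.differentiable (by simp)) (x, t)).hasFDerivAt.comp_hasDerivAt x hγ
    exact h.deriv
  have h2 : (fun p : ℝ × ℝ => pdx f p.1 p.2)
      = fun p => fderiv ℝ (fun p : ℝ × ℝ => f p.1 p.2) p (1, 0) :=
    funext fun p => key p.1 p.2
  rw [Smooth2, h2]
  exact (hf.fderiv_right (by simp)).clm_apply contDiff_const

lemma opEt_apply (τ : ℝ) (f : ℝ → ℝ → ℝ) (x t : ℝ) :
    opEt τ f x t = pdx (pdx f) x t - (f x (t + 2 * τ) - 2 * f x (t + τ) + f x t) / τ ^ 2 := rfl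

lemma opC2t_apply (τ : ℝ) (f : ℝ → ℝ → ℝ) (x t : ℝ) :
    opC2t τ f x t = -(x ^ 2) * pdx f x t - t ^ 2 * pdx f x (t - 2 * τ)
      - 2 * x * t * ((f x t - f x (t - τ)) / τ) + τ * t * pdx f x (t - 2 * τ) := rfl

lemma pdx_opC2t (τ : ℝ) (f : ℝ → ℝ → ℝ) (hf : Smooth2 f) (x t : ℝ) :
    pdx (opC2t τ f) x t =
      -(2 * x) * pdx f x t - x ^ 2 * pdx (pdx f) x t - t ^ 2 * pdx (pdx f) x (t - 2 * τ)
      - 2 * t * ((f x t - f x (t - τ)) / τ)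
      - 2 * x * t * ((pdx f x t - pdx f x (t - τ)) / τ)
      + τ * t * pdx (pdx f) x (t - 2 * τ) := by
  have hg := smooth_pdx f hf
  have A := ((hasDerivAt_pow 2 x).neg).mul (hasDerivAt_pdx (pdx f) hg x t)
  have B := (hasDerivAt_pdx (pdx f) hg x (t - 2 * τ)).const_mul (t ^ 2)
  have C := (((hasDerivAt_id x).const_mul 2).mul_const t).mul
    (((hasDerivAt_pdx f hf x t).sub (hasDerivAt_pdx f hf x (t - τ))).div_const τ)
  have D := (hasDerivAt_pdx (pdx f) hg x (t - 2 * τ)).const_mul (τ * t)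
  have H := ((A.sub B).sub C).add D
  exact H.deriv.trans (by push_cast; simp only [id_eq, Pi.neg_apply, Pi.sub_apply]; ring)

lemma pdx2_opC2t (τ : ℝ) (f : ℝ → ℝ → ℝ) (hf : Smooth2 f) (x t : ℝ) :
    pdx (pdx (opC2t τ f)) x t =
      -2 * pdx f x t - 4 * x * pdx (pdx f) x t - x ^ 2 * pdx (pdx (pdx f)) x t
      - t ^ 2 * pdx (pdx (pdx f)) x (t - 2 * τ)
      - 4 * t * ((pdx f x t - pdx f x (t - τ)) / τ)
      - 2 * x * t * ((pdx (pdx f) x t - pdx (pdx f) x (t - τ)) / τ)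
      + τ * t * pdx (pdx (pdx f)) x (t - 2 * τ) := by
  have hg := smooth_pdx f hf
  have hg2 := smooth_pdx _ hg
  have hfun : (fun y => pdx (opC2t τ f) y t) = fun y =>
      -(2 * y) * pdx f y t - y ^ 2 * pdx (pdx f) y t - t ^ 2 * pdx (pdx f) y (t - 2 * τ)
      - 2 * t * ((f y t - f y (t - τ)) / τ)
      - 2 * y * t * ((pdx f y t - pdx f y (t - τ)) / τ)
      + τ * t * pdx (pdx f) y (t - 2 * τ) :=
    funext fun y => pdx_opC2t τ f hf y t
  show deriv (fun y => pdx (opC2t τ f) y t) x = _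
  rw [hfun]
  have A := (((hasDerivAt_id x).const_mul 2).neg).mul (hasDerivAt_pdx (pdx f) hg x t)
  have B := (hasDerivAt_pow 2 x).mul (hasDerivAt_pdx (pdx (pdx f)) hg2 x t)
  have C := (hasDerivAt_pdx (pdx (pdx f)) hg2 x (t - 2 * τ)).const_mul (t ^ 2)
  have D := (((hasDerivAt_pdx f hf x t).sub (hasDerivAt_pdx f hf x (t - τ))).div_const
    τ).const_mul (2 * t)
  have E := (((hasDerivAt_id x).const_mul 2).mul_const t).mul
    (((hasDerivAt_pdx (pdx f) hg x t).sub (hasDerivAt_pdx (pdx f) hg x (t - τ))).div_const τ)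
  have F := (hasDerivAt_pdx (pdx (pdx f)) hg2 x (t - 2 * τ)).const_mul (τ * t)
  have H := ((((A.sub B).sub C).sub D).sub E).add F
  exact H.deriv.trans (by push_cast; simp only [id_eq, Pi.neg_apply, Pi.sub_apply]; ring)

lemma pdx_opEt (τ : ℝ) (f : ℝ → ℝ → ℝ) (hf : Smooth2 f) (x t : ℝ) :
    pdx (opEt τ f) x t = pdx (pdx (pdx f)) x t
      - (pdx f x (t + 2 * τ) - 2 * pdx f x (t + τ) + pdx f x t) / τ ^ 2 := by
  have hg := smooth_pdx f hf
  have hg2 := smooth_pdx _ hg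
  have H := (hasDerivAt_pdx (pdx (pdx f)) hg2 x t).sub
    ((((hasDerivAt_pdx f hf x (t + 2 * τ)).sub
      ((hasDerivAt_pdx f hf x (t + τ)).const_mul 2)).add
      (hasDerivAt_pdx f hf x t)).div_const (τ ^ 2))
  exact H.deriv

/-- [E_τ, C2_τ] = -4x E_τ, where 4x is the multiplication operator. -/
theorem discrete_wave_C2_commutator (τ : ℝ) (hτ : τ ≠ 0) (f : ℝ → ℝ → ℝ) (hf : Smooth2 f) :
    opEt τ (opC2t τ f) - opC2t τ (opEt τ f) = fun x t => -4 * x * opEt τ f x t := by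
  funext x t
  simp only [Pi.sub_apply]
  rw [opEt_apply τ (opC2t τ f) x t, opC2t_apply τ (opEt τ f) x t]
  rw [pdx2_opC2t τ f hf x t]
  simp only [pdx_opEt τ f hf]
  simp only [opC2t_apply, opEt_apply]
  simp only [show t + 2 * τ - 2 * τ = t by ring, show t + 2 * τ - τ = t + τ by ring,
    show t + τ - 2 * τ = t - τ by ring, show t + τ - τ = t by ring,
    show t - τ + 2 * τ = t + τ by ring, show t - τ + τ = t by ring,
    show t - 2 * τ + 2 * τ = t by ring, show t - 2 * τ + τ = t - τ by ring]
  field_simp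
  ring
end

section
/- With C1 = (x²+t²e^{-τ∂_t})(e^{τ∂_t}-1)/τ + 2xt∂_x + τx∂_x + τx²∂²_x and E_τ = ∂²_x - ((e^{τ∂_t}-1)/τ)², the operator identity [E_τ, C1] = 4(t + τ + τ x∂_x) E_τ holds. -/
open Filter Topology

lemma hda_congr {g : ℝ → ℝ} {d d' x : ℝ} (h : HasDerivAt g d x) (e : d = d') :
    HasDerivAt g d' x := e ▸ h

lemma Smooth2.hd {f : ℝ → ℝ → ℝ} (hf : Smooth2 f) (x s : ℝ) :
    HasDerivAt (fun y => f y s) (pdx f x s) x := by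
  have h : Differentiable ℝ (fun y : ℝ => f y s) :=
    (hf.differentiable (by simp)).comp (differentiable_id.prodMk (differentiable_const s))
  exact (h x).hasDerivAt

lemma Smooth2.pdx {f : ℝ → ℝ → ℝ} (hf : Smooth2 f) : Smooth2 (pdx f) := by
  have h1 : ContDiff ℝ (⊤ : ℕ∞) (fun p : ℝ × ℝ => fderiv ℝ (fun q : ℝ × ℝ => f q.1 q.2) p (1, 0)) :=
    (hf.fderiv_right (by simp)).clm_apply contDiff_const
  have e : (fun p : ℝ × ℝ => _root_.pdx f p.1 p.2)
      = fun p : ℝ × ℝ => fderiv ℝ (fun q : ℝ × ℝ => f q.1 q.2) p (1, 0) := by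
    funext p
    have h2 : HasDerivAt (fun y => f y p.2)
        (fderiv ℝ (fun q : ℝ × ℝ => f q.1 q.2) p (1, 0)) p.1 := by
      have hF := ((hf.differentiable (by simp)) p).hasFDerivAt
      have hline : HasDerivAt (fun y : ℝ => (y, p.2)) ((1:ℝ), (0:ℝ)) p.1 :=
        (hasDerivAt_id p.1).prodMk (hasDerivAt_const p.1 p.2)
      exact hF.comp_hasDerivAt p.1 hline
    exact ((hf.hd p.1 p.2).unique h2)
  unfold Smooth2
  rw [e]
  exact h1

set_option maxHeartbeats 2000000 in
/-- [E_τ, C1_τ] = 4(t + τ + τx∂_x) E_τ. -/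
theorem discrete_wave_C1_commutator (τ : ℝ) (hτ : τ ≠ 0) (f : ℝ → ℝ → ℝ) (hf : Smooth2 f) :
    opEt τ (opC1t τ f) - opC1t τ (opEt τ f)
      = fun x t => 4 * (t + τ) * opEt τ f x t + 4 * τ * x * pdx (opEt τ f) x t := by
  have hf1 : Smooth2 (pdx f) := hf.pdx
  have hf2 : Smooth2 (pdx (pdx f)) := hf1.pdx
  have hf3 : Smooth2 (pdx (pdx (pdx f))) := hf2.pdx
  -- first x-derivative of C1 f
  have e1 : pdx (opC1t τ f) = fun x t =>
      2*x*((f x (t+τ) - f x t)/τ) + x^2*((pdx f x (t+τ) - pdx f x t)/τ)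
      + t^2*((pdx f x t - pdx f x (t-τ))/τ) + 2*t*pdx f x t + 2*x*t*pdx (pdx f) x t
      + τ*pdx f x t + 3*τ*x*pdx (pdx f) x t + τ*x^2*pdx (pdx (pdx f)) x t := by
    funext x t
    have key : HasDerivAt (fun y => opC1t τ f y t)
        (2*x*((f x (t+τ) - f x t)/τ) + x^2*((pdx f x (t+τ) - pdx f x t)/τ)
          + t^2*((pdx f x t - pdx f x (t-τ))/τ) + 2*t*pdx f x t + 2*x*t*pdx (pdx f) x t
          + τ*pdx f x t + 3*τ*x*pdx (pdx f) x t + τ*x^2*pdx (pdx (pdx f)) x t) x :=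
      hda_congr
        ((((((hasDerivAt_pow 2 x).mul (((hf.hd x (t+τ)).sub (hf.hd x t)).div_const τ)).add
          ((((hf.hd x t).sub (hf.hd x (t-τ))).div_const τ).const_mul (t^2))).add
          (((((hasDerivAt_id x).const_mul 2).mul_const t).mul (hf1.hd x t)))).add
          ((((hasDerivAt_id x).const_mul τ).mul (hf1.hd x t)))).add
          ((((hasDerivAt_pow 2 x).const_mul τ).mul (hf2.hd x t))))
        (by simp only [id_eq, Pi.sub_apply]; try (push_cast; ring))
    exact key.deriv
  -- second x-derivative of C1 f
  have e2 : pdx (pdx (opC1t τ f)) = fun x t =>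
      2*((f x (t+τ) - f x t)/τ) + 4*x*((pdx f x (t+τ) - pdx f x t)/τ)
      + x^2*((pdx (pdx f) x (t+τ) - pdx (pdx f) x t)/τ)
      + t^2*((pdx (pdx f) x t - pdx (pdx f) x (t-τ))/τ)
      + 4*t*pdx (pdx f) x t + 2*x*t*pdx (pdx (pdx f)) x t + 4*τ*pdx (pdx f) x t
      + 5*τ*x*pdx (pdx (pdx f)) x t + τ*x^2*pdx (pdx (pdx (pdx f))) x t := by
    rw [e1]
    funext x t
    have key : HasDerivAt (fun y : ℝ =>
        2*y*((f y (t+τ) - f y t)/τ) + y^2*((pdx f y (t+τ) - pdx f y t)/τ)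
        + t^2*((pdx f y t - pdx f y (t-τ))/τ) + 2*t*pdx f y t + 2*y*t*pdx (pdx f) y t
        + τ*pdx f y t + 3*τ*y*pdx (pdx f) y t + τ*y^2*pdx (pdx (pdx f)) y t)
        (2*((f x (t+τ) - f x t)/τ) + 4*x*((pdx f x (t+τ) - pdx f x t)/τ)
          + x^2*((pdx (pdx f) x (t+τ) - pdx (pdx f) x t)/τ)
          + t^2*((pdx (pdx f) x t - pdx (pdx f) x (t-τ))/τ)
          + 4*t*pdx (pdx f) x t + 2*x*t*pdx (pdx (pdx f)) x t + 4*τ*pdx (pdx f) x t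
          + 5*τ*x*pdx (pdx (pdx f)) x t + τ*x^2*pdx (pdx (pdx (pdx f))) x t) x :=
      hda_congr
        ((((((((((hasDerivAt_id x).const_mul 2).mul
            (((hf.hd x (t+τ)).sub (hf.hd x t)).div_const τ)).add
          ((hasDerivAt_pow 2 x).mul (((hf1.hd x (t+τ)).sub (hf1.hd x t)).div_const τ))).add
          ((((hf1.hd x t).sub (hf1.hd x (t-τ))).div_const τ).const_mul (t^2))).add
          ((hf1.hd x t).const_mul (2*t))).add
          ((((hasDerivAt_id x).const_mul 2).mul_const t).mul (hf2.hd x t))).add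
          ((hf1.hd x t).const_mul τ)).add
          (((hasDerivAt_id x).const_mul (3*τ)).mul (hf2.hd x t))).add
          (((hasDerivAt_pow 2 x).const_mul τ).mul (hf3.hd x t)))
        (by simp only [id_eq, Pi.sub_apply]; try (push_cast; ring))
    exact key.deriv
  -- first x-derivative of E f
  have e3 : pdx (opEt τ f) = fun x t =>
      pdx (pdx (pdx f)) x t
        - (pdx f x (t + 2*τ) - 2*pdx f x (t + τ) + pdx f x t)/τ^2 := by
    funext x t
    have key : HasDerivAt (fun y => opEt τ f y t)
        (pdx (pdx (pdx f)) x t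
          - (pdx f x (t + 2*τ) - 2*pdx f x (t + τ) + pdx f x t)/τ^2) x :=
      hda_congr
        ((hf2.hd x t).sub ((((hf.hd x (t+2*τ)).sub ((hf.hd x (t+τ)).const_mul 2)).add
          (hf.hd x t)).div_const (τ^2)))
        (by simp only [id_eq]; try (push_cast; ring))
    exact key.deriv
  -- second x-derivative of E f
  have e4 : pdx (pdx (opEt τ f)) = fun x t =>
      pdx (pdx (pdx (pdx f))) x t
        - (pdx (pdx f) x (t + 2*τ) - 2*pdx (pdx f) x (t + τ) + pdx (pdx f) x t)/τ^2 := by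
    rw [e3]
    funext x t
    have key : HasDerivAt (fun y : ℝ =>
        pdx (pdx (pdx f)) y t - (pdx f y (t + 2*τ) - 2*pdx f y (t + τ) + pdx f y t)/τ^2)
        (pdx (pdx (pdx (pdx f))) x t
          - (pdx (pdx f) x (t + 2*τ) - 2*pdx (pdx f) x (t + τ) + pdx (pdx f) x t)/τ^2) x :=
      hda_congr
        ((hf3.hd x t).sub ((((hf1.hd x (t+2*τ)).sub ((hf1.hd x (t+τ)).const_mul 2)).add
          (hf1.hd x t)).div_const (τ^2)))
        (by simp only [id_eq]; try (push_cast; ring))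
    exact key.deriv
  funext x t
  show (pdx (pdx (opC1t τ f)) x t
      - (opC1t τ f x (t + 2*τ) - 2 * opC1t τ f x (t + τ) + opC1t τ f x t) / τ^2)
    - (x^2 * ((opEt τ f x (t + τ) - opEt τ f x t)/τ)
      + t^2 * ((opEt τ f x t - opEt τ f x (t - τ))/τ)
      + 2*x*t*pdx (opEt τ f) x t + τ*x*pdx (opEt τ f) x t
      + τ*x^2*pdx (pdx (opEt τ f)) x t)
    = 4 * (t + τ) * opEt τ f x t + 4 * τ * x * pdx (opEt τ f) x t
  rw [e2, e4, e3]
  simp only [opC1t, opEt]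
  simp only [show t + 2*τ + τ = t + 3*τ from by ring, show t + τ + 2*τ = t + 3*τ from by ring,
    show t + 2*τ - τ = t + τ from by ring, show t + τ + τ = t + 2*τ from by ring,
    show t + τ - τ = t from by ring, show t - τ + 2*τ = t + τ from by ring,
    show t - τ + τ = t from by ring]
  field_simp
  ring
end
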